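/- For a nontrivial finite cyclic group G of order n with generator set S, the Randić index of the generator graph satisfies R(Γ(G)) = (1/(n−1))·((1/2)|S|(|S|−1) + (n−|S|)√((n−1)|S|)). -/

import Mathlib

/-- The generator graph of a group: vertices are group elements, two distinct
vertices are adjacent iff at least one of them generates the group. -/
def genGraph (G : Type*) [Group G] : SimpleGraph G where
  Adj x y := x ≠ y ∧ (Subgroup.zpowers x = ⊤ ∨ Subgroup.zpowers y = ⊤)
  symm := by
    constructor
    intro x y h
    exact ⟨h.1.symm, h.2.symm⟩
  loopless := by
    constructor
    intro x h
    exact h.1 rfl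

noncomputable instance {G : Type*} [Group G] [Fintype G] (x : G) :
    Fintype ((genGraph G).neighborSet x) := Fintype.ofFinite _

-- The set of generators of `G`, as a finset.
open Classical in
noncomputable def gens (G : Type*) [Group G] [Fintype G] : Finset G :=
  Finset.univ.filter fun x => Subgroup.zpowers x = ⊤

-- The Randić index: the sum over edges `uv` of `1 / √(deg u * deg v)`
-- (computed as half the sum over ordered adjacent pairs).
open Classical in
noncomputable def randic {V : Type*} [Fintype V] (Γ : SimpleGraph V)
    [∀ v, Fintype (Γ.neighborSet v)] : ℝ :=
  (∑ u : V, ∑ v : V,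
    if Γ.Adj u v then 1 / Real.sqrt ((Γ.degree u : ℝ) * (Γ.degree v : ℝ)) else 0) / 2

lemma mem_gens {G : Type*} [Group G] [Fintype G] {x : G} :
    x ∈ gens G ↔ Subgroup.zpowers x = ⊤ := by
  classical simp [gens]

open Classical in
lemma nbhd_gen {G : Type*} [Group G] [Fintype G] {x : G} (hx : x ∈ gens G) :
    (genGraph G).neighborFinset x = Finset.univ.erase x := by
  classical
  ext y
  simp only [SimpleGraph.mem_neighborFinset, Finset.mem_erase, Finset.mem_univ, and_true]
  constructor
  · rintro ⟨h, _⟩; exact h.symm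
  · intro h; exact ⟨h.symm, Or.inl (mem_gens.mp hx)⟩

lemma nbhd_nongen {G : Type*} [Group G] [Fintype G] {x : G} (hx : x ∉ gens G) :
    (genGraph G).neighborFinset x = gens G := by
  classical
  ext y
  simp only [SimpleGraph.mem_neighborFinset]
  constructor
  · rintro ⟨h, hg | hg⟩
    · exact absurd (mem_gens.mpr hg) hx
    · exact mem_gens.mpr hg
  · intro h
    refine ⟨fun e => hx (e ▸ h), Or.inr (mem_gens.mp h)⟩

open Classical in
lemma deg_gen {G : Type*} [Group G] [Fintype G] {x : G} (hx : x ∈ gens G) :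
    (genGraph G).degree x = Fintype.card G - 1 := by
  rw [SimpleGraph.degree, nbhd_gen hx, Finset.card_erase_of_mem (Finset.mem_univ x),
    Finset.card_univ]

lemma deg_nongen {G : Type*} [Group G] [Fintype G] {x : G} (hx : x ∉ gens G) :
    (genGraph G).degree x = (gens G).card := by
  rw [SimpleGraph.degree, nbhd_nongen hx]

theorem stmt16 {G : Type*} [Group G] [Fintype G] [IsCyclic G] [Nontrivial G] :
    randic (genGraph G) =
      (1 / ((Fintype.card G : ℝ) - 1)) *
        ((1 / 2) * ((gens G).card : ℝ) * (((gens G).card : ℝ) - 1)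
          + ((Fintype.card G : ℝ) - ((gens G).card : ℝ))
            * Real.sqrt (((Fintype.card G : ℝ) - 1) * ((gens G).card : ℝ))) := by
  classical
  have hn2 : 2 ≤ Fintype.card G := Fintype.one_lt_card
  have hk1 : 1 ≤ (gens G).card := by
    obtain ⟨g, hg⟩ := IsCyclic.exists_generator (α := G)
    exact Finset.card_pos.mpr ⟨g, mem_gens.mpr ((Subgroup.eq_top_iff' _).mpr hg)⟩
  have hkn : (gens G).card ≤ Fintype.card G := by
    simpa using Finset.card_le_card (Finset.subset_univ (gens G))
  set n : ℝ := (Fintype.card G : ℝ) with hn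
  set k : ℝ := ((gens G).card : ℝ) with hk
  have hnR : (2:ℝ) ≤ n := by rw [hn]; exact_mod_cast hn2
  have hkR : (1:ℝ) ≤ k := by rw [hk]; exact_mod_cast hk1
  have hknR : k ≤ n := by rw [hn, hk]; exact_mod_cast hkn
  have hn1 : (0:ℝ) < n - 1 := by linarith
  have hk0 : (0:ℝ) < k := by linarith
  set s : ℝ := Real.sqrt ((n - 1) * k) with hs
  have hs0 : 0 < s := Real.sqrt_pos.mpr (by positivity)
  have hs2 : s ^ 2 = (n - 1) * k := Real.sq_sqrt (by positivity)
  have hdg : ∀ u ∈ gens G, ((genGraph G).degree u : ℝ) = n - 1 := by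
    intro u hu
    rw [deg_gen hu, Nat.cast_sub (by omega)]
    simp [hn]
  have hdn : ∀ u ∉ gens G, ((genGraph G).degree u : ℝ) = k := by
    intro u hu
    rw [deg_nongen hu]
  have hfil : Finset.univ.filter (· ∈ gens G) = gens G := by
    ext x; simp
  have hfilc : (Finset.univ.filter (fun x => ¬ x ∈ gens G)).card
      = Fintype.card G - (gens G).card := by
    rw [Finset.filter_not, hfil, Finset.card_sdiff_of_subset (Finset.subset_univ _), Finset.card_univ]
  set a : ℝ := 1 / (n - 1) with ha
  set b : ℝ := 1 / s with hb
  -- inner sum for generators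
  have inner1 : ∀ u ∈ gens G,
      (∑ v : G, if (genGraph G).Adj u v then
        1 / Real.sqrt (((genGraph G).degree u : ℝ) * ((genGraph G).degree v : ℝ)) else 0)
      = (k - 1) * a + (n - k) * b := by
    intro u hu
    rw [← Finset.sum_filter_add_sum_filter_not Finset.univ (· ∈ gens G), hfil]
    have h1 : (∑ v ∈ gens G, if (genGraph G).Adj u v then
        1 / Real.sqrt (((genGraph G).degree u : ℝ) * ((genGraph G).degree v : ℝ)) else 0)
        = (k - 1) * a := by
      have : ∀ v ∈ gens G, (if (genGraph G).Adj u v then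
          1 / Real.sqrt (((genGraph G).degree u : ℝ) * ((genGraph G).degree v : ℝ)) else 0)
          = a - (if u = v then a else 0) := by
        intro v hv
        have hadj : (genGraph G).Adj u v ↔ u ≠ v := by
          constructor
          · exact fun h => h.1
          · exact fun h => ⟨h, Or.inl (mem_gens.mp hu)⟩
        by_cases huv : u = v
        · simp [hadj, huv]
        · rw [if_pos (hadj.mpr huv), if_neg huv, hdg u hu, hdg v hv,
            Real.sqrt_mul_self (le_of_lt hn1), ha]
          ring
      rw [Finset.sum_congr rfl this, Finset.sum_sub_distrib, Finset.sum_const,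
        Finset.sum_ite_eq (gens G) u (fun _ => a), if_pos hu, nsmul_eq_mul, ← hk]
      ring
    have h2 : (∑ v ∈ Finset.univ.filter (fun x => ¬ x ∈ gens G),
        if (genGraph G).Adj u v then
        1 / Real.sqrt (((genGraph G).degree u : ℝ) * ((genGraph G).degree v : ℝ)) else 0)
        = (n - k) * b := by
      have : ∀ v ∈ Finset.univ.filter (fun x => ¬ x ∈ gens G),
          (if (genGraph G).Adj u v then
          1 / Real.sqrt (((genGraph G).degree u : ℝ) * ((genGraph G).degree v : ℝ)) else 0)
          = b := by
        intro v hv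
        rw [Finset.mem_filter] at hv
        have hne : u ≠ v := fun e => hv.2 (e ▸ hu)
        rw [if_pos ⟨hne, Or.inl (mem_gens.mp hu)⟩, hdg u hu, hdn v hv.2, hb, hs]
      rw [Finset.sum_congr rfl this, Finset.sum_const, hfilc, nsmul_eq_mul,
        Nat.cast_sub hkn, ← hn, ← hk]
    rw [h1, h2]
  -- inner sum for non-generators
  have inner2 : ∀ u ∉ gens G,
      (∑ v : G, if (genGraph G).Adj u v then
        1 / Real.sqrt (((genGraph G).degree u : ℝ) * ((genGraph G).degree v : ℝ)) else 0)
      = k * b := by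
    intro u hu
    have : ∀ v : G, (if (genGraph G).Adj u v then
        1 / Real.sqrt (((genGraph G).degree u : ℝ) * ((genGraph G).degree v : ℝ)) else 0)
        = if v ∈ gens G then b else 0 := by
      intro v
      by_cases hv : v ∈ gens G
      · have hne : u ≠ v := fun e => hu (e ▸ hv)
        rw [if_pos ⟨hne, Or.inr (mem_gens.mp hv)⟩, if_pos hv, hdn u hu, hdg v hv, hb, hs,
          mul_comm]
      · have : ¬ (genGraph G).Adj u v := by
          rintro ⟨_, h | h⟩
          · exact hu (mem_gens.mpr h)
          · exact hv (mem_gens.mpr h)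
        rw [if_neg this, if_neg hv]
    rw [Finset.sum_congr rfl (fun v _ => this v), Finset.sum_ite_mem,
      Finset.univ_inter, Finset.sum_const, nsmul_eq_mul, ← hk]
  -- assemble
  have hT : (∑ u : G, ∑ v : G, if (genGraph G).Adj u v then
      1 / Real.sqrt (((genGraph G).degree u : ℝ) * ((genGraph G).degree v : ℝ)) else 0)
      = k * ((k - 1) * a + (n - k) * b) + (n - k) * (k * b) := by
    rw [← Finset.sum_filter_add_sum_filter_not Finset.univ (· ∈ gens G), hfil]
    rw [Finset.sum_congr rfl inner1, Finset.sum_congr rfl (fun u hu =>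
      inner2 u (Finset.mem_filter.mp hu).2), Finset.sum_const, Finset.sum_const,
      hfilc, nsmul_eq_mul, nsmul_eq_mul, Nat.cast_sub hkn, ← hn, ← hk]
  have hss : s * s = (n - 1) * k := by rw [← sq]; exact hs2
  have hinv : 1 / s = s / ((n - 1) * k) := by
    rw [div_eq_div_iff hs0.ne' (by positivity)]
    linarith [hss]
  rw [randic, hT, ha, hb, hinv]
  field_simp
  ring
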